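/- arXiv:1409.4644 — 2 statements merged into one kernel-verified Lean document; each statement's English description precedes it below -/
import Mathlib

section
/- Let r > 1 and 1 ≤ a < r be coprime integers, and suppose m is an integer with 0 < m ≤ r/2 and a·m ≡ -1 (mod r). Let A = ∑_{i=0}^{r-1} t^i and B = (∑_{j=0}^{r-2} t^j)·(∑_{j=0}^{a-1} t^j)·(∑_{j=0}^{r-a-1} t^j) in ℤ[t]. Define C(t) = ∑_{i=0}^{r-2} c_{i+3} t^{i+3} where c_{i+3} = -min{m, |m - i_a|} and i_a is the unique integer with 0 < i_a ≤ r and i_a ≡ -i·m (mod r). Then B·C ≡ 1 (mod A). -/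
open Polynomial Finset

private lemma countLem (m w : ℕ) (hw1 : 1 ≤ w) (hw2 : w ≤ 2*m) :
    ((range m).filter (fun j => j + 1 ≤ w ∧ w ≤ j + m)).card = min w (2*m - w) := by
  have h : (range m).filter (fun j => j + 1 ≤ w ∧ w ≤ j + m)
      = Icc (w - m) (min (w-1) (m-1)) := by
    ext j; simp only [mem_filter, mem_range, mem_Icc]; omega
  rw [h, Nat.card_Icc]; omega

private lemma tentBox (y : Polynomial ℤ) (m : ℕ) :
    ∑ w ∈ Icc 1 (2 * m), Polynomial.C ((min w (2 * m - w) : ℕ) : ℤ) * y ^ w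
      = y * (∑ j ∈ range m, y ^ j) ^ 2 := by
  have step1 : ∀ w ∈ Icc 1 (2*m),
      Polynomial.C ((min w (2 * m - w) : ℕ) : ℤ) * y ^ w
        = ∑ j ∈ range m, (if j + 1 ≤ w ∧ w ≤ j + m then y ^ w else 0) := by
    intro w hw
    rw [mem_Icc] at hw
    rw [← countLem m w hw.1 hw.2]
    rw [← Finset.sum_filter, Finset.sum_const]
    rw [nsmul_eq_mul, Polynomial.C_eq_natCast]
  rw [Finset.sum_congr rfl step1, Finset.sum_comm]
  have step2 : ∀ j ∈ range m,
      (∑ w ∈ Icc 1 (2*m), if j + 1 ≤ w ∧ w ≤ j + m then y ^ w else 0)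
        = y ^ (j+1) * ∑ k ∈ range m, y ^ k := by
    intro j hj
    rw [mem_range] at hj
    rw [← Finset.sum_filter]
    have hf : (Icc 1 (2*m)).filter (fun w => j + 1 ≤ w ∧ w ≤ j + m) = Icc (j+1) (j+m) := by
      ext w; simp only [mem_filter, mem_Icc]; omega
    rw [hf, ← Finset.Ico_add_one_right_eq_Icc, Finset.sum_Ico_eq_sum_range]
    have : j + m + 1 - (j + 1) = m := by omega
    rw [this, Finset.mul_sum]
    exact Finset.sum_congr rfl fun k _ => by rw [← pow_add]
  rw [Finset.sum_congr rfl step2, ← Finset.sum_mul]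
  have : ∑ j ∈ range m, y ^ (j+1) = y * ∑ j ∈ range m, y ^ j := by
    rw [Finset.mul_sum]; exact Finset.sum_congr rfl fun j _ => by rw [pow_succ]; ring
  rw [this]; ring

private lemma coeffEq (m w : ℕ) :
    -(min (m:ℤ) |(m:ℤ) - (w:ℤ)|) = ((min w (2*m - w) : ℕ) : ℤ) - (m:ℤ) := by
  rcases le_total ((w:ℤ)) ((m:ℤ)) with h | h
  · rw [abs_of_nonneg (by linarith)]
    have hw : w ≤ m := by exact_mod_cast h
    have h1 : min w (2*m - w) = w := by omega
    rw [h1, min_eq_right (by linarith : (m:ℤ) - w ≤ m)]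
    ring
  · rw [abs_of_nonpos (by linarith), neg_sub]
    have hw : m ≤ w := by exact_mod_cast h
    rcases le_total w (2*m) with h2 | h2
    · have h1 : min w (2*m - w) = 2*m - w := by omega
      rw [h1, min_eq_right (by omega : (w:ℤ) - m ≤ m)]
      push_cast [Nat.cast_sub h2]
      ring
    · have h1 : min w (2*m - w) = 0 := by omega
      rw [h1, min_eq_left (by omega : (m:ℤ) ≤ w - m)]
      push_cast
      ring

private lemma tentFull (y : Polynomial ℤ) {m r : ℕ} (h2m : 2*m ≤ r) :
    ∑ w ∈ Icc 1 r, Polynomial.C (-(min (m:ℤ) |(m:ℤ) - (w:ℤ)|)) * y ^ w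
      = y * (∑ j ∈ range m, y ^ j) ^ 2
        - Polynomial.C (m:ℤ) * (y * ∑ w ∈ range r, y ^ w) := by
  have hcoef : ∀ w : ℕ, Polynomial.C (-(min (m:ℤ) |(m:ℤ) - (w:ℤ)|))
      = Polynomial.C ((min w (2*m - w) : ℕ) : ℤ) - Polynomial.C (m:ℤ) := by
    intro w; rw [← Polynomial.C_sub]; exact congrArg _ (coeffEq m w)
  have e1 : ∑ w ∈ Icc 1 r, Polynomial.C (-(min (m:ℤ) |(m:ℤ) - (w:ℤ)|)) * y ^ w
      = (∑ w ∈ Icc 1 r, Polynomial.C ((min w (2*m - w) : ℕ) : ℤ) * y ^ w)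
        - Polynomial.C (m:ℤ) * ∑ w ∈ Icc 1 r, y ^ w := by
    rw [Finset.mul_sum, ← Finset.sum_sub_distrib]
    exact Finset.sum_congr rfl fun w _ => by rw [hcoef w]; ring
  have e2 : ∑ w ∈ Icc 1 r, Polynomial.C ((min w (2*m - w) : ℕ) : ℤ) * y ^ w
      = ∑ w ∈ Icc 1 (2*m), Polynomial.C ((min w (2*m - w) : ℕ) : ℤ) * y ^ w := by
    refine (Finset.sum_subset (Finset.Icc_subset_Icc_right h2m) ?_).symm
    intro w hw hw2
    rw [mem_Icc] at hw; simp only [mem_Icc, not_and, not_le] at hw2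
    have : min w (2*m - w) = 0 := by omega
    rw [this]; simp
  have e3 : ∑ w ∈ Icc 1 r, y ^ w = y * ∑ w ∈ range r, y ^ w := by
    rw [← Finset.Ico_add_one_right_eq_Icc, Finset.sum_Ico_eq_sum_range]
    have : r + 1 - 1 = r := by omega
    rw [this, Finset.mul_sum]
    exact Finset.sum_congr rfl fun k _ => by rw [pow_add, pow_one]
  rw [e1, e2, e3, tentBox y m]

private lemma powMod (r n : ℕ) : ((X:Polynomial ℤ)^r - 1) ∣ X^n - X^(n % r) := by
  have h : (X:Polynomial ℤ)^n = (X^r)^(n/r) * X^(n % r) := by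
    rw [← pow_mul, ← pow_add, Nat.div_add_mod]
  rw [h, show ((X:Polynomial ℤ)^r)^(n/r) * X^(n%r) - X^(n%r)
      = X^(n%r) * (((X:Polynomial ℤ)^r)^(n/r) - 1) from by ring]
  exact Dvd.dvd.mul_left (by simpa using sub_dvd_pow_sub_pow ((X:Polynomial ℤ)^r) 1 (n/r)) _

private lemma powCong (r u v : ℕ) (h : u % r = v % r) :
    ((X:Polynomial ℤ)^r - 1) ∣ X^u - X^v := by
  have e : (X:Polynomial ℤ)^u - X^v
      = (X^u - X^(u % r)) - (X^v - X^(v % r)) := by rw [h]; ring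
  rw [e]
  exact dvd_sub (powMod r u) (powMod r v)

private lemma repUnique (r u v : ℕ) (hu1 : 0 < u) (hu2 : u ≤ r) (hv1 : 0 < v)
    (hv2 : v ≤ r) (h : (r:ℤ) ∣ (u:ℤ) - (v:ℤ)) : u = v := by
  have hm : v ≡ u [MOD r] := Nat.modEq_iff_dvd.mpr h
  have hm' : v % r = u % r := hm
  rcases eq_or_lt_of_le hu2 with rfl | hu
  · rcases eq_or_lt_of_le hv2 with h' | hv
    · omega
    · rw [Nat.mod_self, Nat.mod_eq_of_lt hv] at hm'; omega
  · rcases eq_or_lt_of_le hv2 with rfl | hv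
    · rw [Nat.mod_self, Nat.mod_eq_of_lt hu] at hm'; omega
    · rw [Nat.mod_eq_of_lt hu, Nat.mod_eq_of_lt hv] at hm'; omega

private lemma copAux {K : Type*} [Field K] (c : K) (p : Polynomial K)
    (h : Polynomial.eval c p ≠ 0) : IsCoprime (X - Polynomial.C c : Polynomial K) p := by
  obtain ⟨q, hq⟩ := Polynomial.X_sub_C_dvd_sub_C_eval (a := c) (p := p)
  refine ⟨-(Polynomial.C (Polynomial.eval c p)⁻¹) * q, Polynomial.C (Polynomial.eval c p)⁻¹, ?_⟩
  have hC : Polynomial.C (Polynomial.eval c p)⁻¹ * Polynomial.C (Polynomial.eval c p)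
      = 1 := by rw [← Polynomial.C_mul, inv_mul_cancel₀ h, Polynomial.C_1]
  linear_combination (Polynomial.C (Polynomial.eval c p)⁻¹) * hq + hC

private lemma cancelStep (r k l : ℕ) (hr : 1 < r) (f : Polynomial ℤ)
    (h : (∑ i ∈ range r, (X:Polynomial ℤ)^i) ∣ X^k * ((X:Polynomial ℤ) - 1)^l * f) :
    (∑ i ∈ range r, (X:Polynomial ℤ)^i) ∣ f := by
  set A : Polynomial ℤ := ∑ i ∈ range r, (X:Polynomial ℤ)^i with hA
  have hmonic : A.Monic := monic_geom_sum_X (by omega)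
  have h' : A.map (Int.castRingHom ℚ) ∣ (X^k * ((X:Polynomial ℤ) - 1)^l * f).map (Int.castRingHom ℚ) :=
    Polynomial.map_dvd _ h
  rw [Polynomial.map_mul, Polynomial.map_mul, Polynomial.map_pow, Polynomial.map_pow,
    Polynomial.map_X, Polynomial.map_sub, Polynomial.map_X, Polynomial.map_one] at h'
  have hAmap : A.map (Int.castRingHom ℚ) = ∑ i ∈ range r, (X:Polynomial ℚ)^i := by
    rw [hA, Polynomial.map_sum]
    exact Finset.sum_congr rfl fun i _ => by rw [Polynomial.map_pow, Polynomial.map_X]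
  have heval1 : Polynomial.eval (1:ℚ) (A.map (Int.castRingHom ℚ)) = (r:ℚ) := by
    rw [hAmap]; simp [Polynomial.eval_finset_sum]
  have heval0 : Polynomial.eval (0:ℚ) (A.map (Int.castRingHom ℚ)) = 1 := by
    rw [hAmap]
    simp only [Polynomial.eval_finset_sum, Polynomial.eval_pow, Polynomial.eval_X]
    rw [Finset.sum_eq_single 0]
    · exact pow_zero 0
    · intro b _ hb; exact zero_pow hb
    · intro hz; exact absurd (Finset.mem_range.mpr (by omega)) hz
  have hc1 : IsCoprime ((X:Polynomial ℚ) - 1) (A.map (Int.castRingHom ℚ)) := by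
    have := copAux (1:ℚ) (A.map (Int.castRingHom ℚ))
      (by rw [heval1]; exact_mod_cast Nat.cast_ne_zero.mpr (by omega))
    rwa [Polynomial.C_1] at this
  have hc0 : IsCoprime (X:Polynomial ℚ) (A.map (Int.castRingHom ℚ)) := by
    have := copAux (0:ℚ) (A.map (Int.castRingHom ℚ)) (by rw [heval0]; exact one_ne_zero)
    rwa [Polynomial.C_0, sub_zero] at this
  have hcop : IsCoprime ((X:Polynomial ℚ)^k * ((X:Polynomial ℚ) - 1)^l) (A.map (Int.castRingHom ℚ)) :=
    (hc0.pow_left).mul_left (hc1.pow_left)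
  have h'' : A.map (Int.castRingHom ℚ) ∣ f.map (Int.castRingHom ℚ) :=
    hcop.symm.dvd_of_dvd_mul_left h'
  exact (Polynomial.map_dvd_map _ Int.cast_injective hmonic).mp h''

private lemma F2Step (P Xp Ya Dy Sm Sr Ym Yr Cm q3 q4 : Polynomial ℤ)
    (htent : Dy = Ya * Sm^2 - Cm * (Ya * Sr))
    (gm : Sm * (Ya - 1) = Ym - 1)
    (gr : Sr * (Ya - 1) = Yr - 1)
    (h4 : Xp * Ym - 1 = P * q4)
    (h3 : Yr - 1 = P * q3) :
    Xp^2 * (Ya-1)^2 * Dy - Ya*(Xp-1)^2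
      = P * (Ya*(Xp*Ym - 2*Xp + 1)*q4 - Cm*Xp^2*Ya*(Ya-1)*q3) := by
  linear_combination (Xp^2*(Ya-1)^2) * htent
    + (Xp^2*Ya*((Ya-1)*Sm + Ym - 1)) * gm
    - (Cm*Xp^2*Ya*(Ya-1)) * gr
    + (Ya*(Xp*Ym - 2*Xp + 1)) * h4
    - (Cm*Xp^2*Ya*(Ya-1)) * h3

private lemma bigStep (P Xp Ya S1 S2 S3 Cp Dy R1 R2 q1 q2 : Polynomial ℤ)
    (gB1 : S1 * (Xp - 1) = R1)
    (gB2 : S2 * (Xp - 1) = Ya - 1)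
    (gB3 : S3 * (Xp - 1) = R2)
    (hw1 : Xp * R1 = P + 1 - Xp)
    (hw2 : Ya * R2 = P + 1 - Ya)
    (hq1 : Cp - Xp^3 * Dy = P * q1)
    (hq2 : Xp^2 * (Ya - 1)^2 * Dy - Ya * (Xp-1)^2 = P * q2) :
    P ∣ (Xp^4 * Ya * (Xp-1)^3) * (S1 * S2 * S3 * Cp - 1) := by
  refine ⟨Xp^3*Cp*(Ya-1)*(P + 2 - Xp - Ya) + Xp^3*(Xp-1)*(Ya-1)^2*q1
    + Xp^4*(Xp-1)*q2, ?_⟩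
  linear_combination (Xp^4*Ya*Cp*S2*S3*(Xp-1)^2) * gB1
    + (Xp^4*Ya*Cp*R1*S3*(Xp-1)) * gB2
    + (Xp^4*Ya*Cp*R1*(Ya-1)) * gB3
    + (Xp^3*Cp*(Ya-1)*(Ya*R2)) * hw1
    + (Xp^3*Cp*(Ya-1)*(P+1-Xp)) * hw2
    + (Xp^3*(Xp-1)*(Ya-1)^2) * hq1
    + (Xp^4*(Xp-1)) * hq2

/-- Theorem on the coefficients of the orbifold RR numerator: with
`A = ∑_{i<r} t^i`, `B = (∑_{j<r-1} t^j)(∑_{j<a} t^j)(∑_{j<r-a} t^j)`, `m` satisfying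
`0 < m ≤ r/2` and `a·m ≡ -1 (mod r)`, and `C(t) = ∑_{i=0}^{r-2} c_{i+3} t^{i+3}` where
`c_{i+3} = -min{m, |m - i_a|}` and `i_a` is the unique integer with `0 < i_a ≤ r` and
`i_a ≡ -i·m (mod r)`, we have `B·C ≡ 1 (mod A)`. -/
theorem stmt7 (r a m : ℕ) (hr : 1 < r) (ha1 : 1 ≤ a) (har : a < r)
    (hcop : Nat.Coprime a r) (hm0 : 0 < m) (hmr : 2 * m ≤ r)
    (hmod : (r : ℤ) ∣ (a * m + 1))
    (ia : ℕ → ℕ) (hia : ∀ i, 0 < ia i ∧ ia i ≤ r ∧ (r : ℤ) ∣ (ia i + i * m)) :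
    (∑ i ∈ range r, (X : Polynomial ℤ) ^ i) ∣
      ((∑ j ∈ range (r - 1), (X : Polynomial ℤ) ^ j) * (∑ j ∈ range a, X ^ j) *
          (∑ j ∈ range (r - a), X ^ j) *
        (∑ i ∈ range (r - 1),
          Polynomial.C (-(min (m : ℤ) |(m : ℤ) - (ia i : ℤ)|)) * X ^ (i + 3))
        - 1) := by
  have hr0 : 0 < r := by omega
  have hia1 : ∀ i, 0 < ia i := fun i => (hia i).1
  have hia2 : ∀ i, ia i ≤ r := fun i => (hia i).2.1
  have hia3 : ∀ i, (r:ℤ) ∣ ((ia i : ℤ) + i * m) := fun i => (hia i).2.2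
  -- the coefficient/power reindexing facts
  have hadvd : ∀ i : ℕ, (r:ℤ) ∣ ((a * ia i : ℕ):ℤ) - (i:ℤ) := by
    intro i
    have e : ((a * ia i : ℕ):ℤ) - (i:ℤ)
        = a * ((ia i : ℤ) + i*m) - i * ((a:ℤ)*m+1) := by push_cast; ring
    rw [e]; exact dvd_sub ((hia3 i).mul_left _) (hmod.mul_left _)
  have hmodai : ∀ i : ℕ, (a * ia i) % r = i % r := by
    intro i
    have h1 : i ≡ a * ia i [MOD r] := Nat.modEq_iff_dvd.mpr (hadvd i)
    exact h1.symm
  have hiam : ia (r-1) = m := by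
    apply repUnique r _ _ (hia1 _) (hia2 _) hm0 (by omega)
    have h3 := hia3 (r-1)
    have e : ((ia (r-1) : ℤ)) - m
        = ((ia (r-1):ℤ) + ((r-1 : ℕ):ℤ) * m) - m * r := by
      push_cast [Nat.cast_sub (by omega : 1 ≤ r)]; ring
    rw [e]; exact dvd_sub h3 (dvd_mul_left _ _)
  -- reindexation: orbit sum equals interval sum
  have hED : (∑ i ∈ range r,
        Polynomial.C (-(min (m : ℤ) |(m : ℤ) - (ia i : ℤ)|)) * ((X:Polynomial ℤ)^a) ^ (ia i))
      = ∑ w ∈ Icc 1 r,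
        Polynomial.C (-(min (m : ℤ) |(m : ℤ) - (w : ℤ)|)) * ((X:Polynomial ℤ)^a) ^ w := by
    refine Finset.sum_nbij' (fun i => ia i) (fun w => (a*w) % r) ?_ ?_ ?_ ?_ ?_
    · intro i _; rw [mem_Icc]; exact ⟨hia1 i, hia2 i⟩
    · intro w _; rw [mem_range]; exact Nat.mod_lt _ hr0
    · intro i hi
      rw [mem_range] at hi
      show (a * ia i) % r = i
      rw [hmodai i, Nat.mod_eq_of_lt hi]
    · intro w hw
      rw [mem_Icc] at hw
      apply repUnique r _ _ (hia1 _) (hia2 _) hw.1 hw.2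
      have h3 := hia3 ((a*w) % r)
      have hk : (r:ℤ) ∣ ((a*w : ℕ):ℤ) - (((a*w) % r : ℕ):ℤ) := by
        refine ⟨((a*w)/r : ℕ), ?_⟩
        have hd : r * ((a*w)/r) + (a*w) % r = a*w := Nat.div_add_mod (a*w) r
        have hd' : ((a*w : ℕ):ℤ) = (r:ℤ) * (((a*w)/r : ℕ):ℤ) + (((a*w) % r : ℕ):ℤ) := by
          exact_mod_cast hd.symm
        linarith
      have e : ((ia ((a*w)%r) : ℤ)) - w
          = ((ia ((a*w)%r) : ℤ) + (((a*w)%r : ℕ):ℤ) * m)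
            + m * (((a*w : ℕ):ℤ) - (((a*w) % r : ℕ):ℤ)) - w * ((a:ℤ)*m + 1) := by
        push_cast; ring
      rw [e]
      exact dvd_sub (dvd_add (hia3 _) (hk.mul_left m)) (hmod.mul_left w)
    · intro i _; rfl
  -- extend the C-sum to range r (the extra term vanishes)
  have hCext : (∑ i ∈ range (r-1),
        Polynomial.C (-(min (m : ℤ) |(m : ℤ) - (ia i : ℤ)|)) * (X:Polynomial ℤ) ^ (i + 3))
      = ∑ i ∈ range r,
        Polynomial.C (-(min (m : ℤ) |(m : ℤ) - (ia i : ℤ)|)) * (X:Polynomial ℤ) ^ (i + 3) := by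
    refine Finset.sum_subset (Finset.range_subset_range.mpr (by omega)) ?_
    intro i h1 h2
    rw [mem_range] at h1 h2
    have hieq : i = r - 1 := by omega
    rw [hieq, hiam, sub_self, abs_zero, min_eq_right (by positivity : (0:ℤ) ≤ (m:ℤ)),
      neg_zero, Polynomial.C_0, zero_mul]
  -- congruence between C and X^3 * Dy
  have hCD : ((X:Polynomial ℤ)^r - 1) ∣
      (∑ i ∈ range (r-1),
        Polynomial.C (-(min (m : ℤ) |(m : ℤ) - (ia i : ℤ)|)) * (X:Polynomial ℤ) ^ (i + 3))
      - X^3 * ∑ w ∈ Icc 1 r,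
          Polynomial.C (-(min (m : ℤ) |(m : ℤ) - (w : ℤ)|)) * ((X:Polynomial ℤ)^a) ^ w := by
    rw [hCext, ← hED, Finset.mul_sum, ← Finset.sum_sub_distrib]
    apply Finset.dvd_sum
    intro i _
    have e : Polynomial.C (-(min (m : ℤ) |(m : ℤ) - (ia i : ℤ)|)) * (X:Polynomial ℤ) ^ (i + 3)
        - X^3 * (Polynomial.C (-(min (m : ℤ) |(m : ℤ) - (ia i : ℤ)|)) * ((X:Polynomial ℤ)^a) ^ (ia i))
        = Polynomial.C (-(min (m : ℤ) |(m : ℤ) - (ia i : ℤ)|))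
            * ((X:Polynomial ℤ)^(i+3) - X^(a * ia i + 3)) := by
      rw [← pow_mul]; ring
    rw [e]
    exact Dvd.dvd.mul_left (powCong r _ _ ((Nat.ModEq.add_right 3 (hmodai i)).symm)) _
  obtain ⟨q1, hq1⟩ := hCD
  -- the F2 congruence
  have hyr : ((X:Polynomial ℤ)^r - 1) ∣ ((X:Polynomial ℤ)^a)^r - 1 := by
    have e : ((X:Polynomial ℤ)^a)^r = ((X:Polynomial ℤ)^r)^a := by
      rw [← pow_mul, mul_comm, pow_mul]
    rw [e]
    simpa using sub_dvd_pow_sub_pow ((X:Polynomial ℤ)^r) 1 a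
  obtain ⟨q3, hq3⟩ := hyr
  have hdr : (a*m + 1) % r = 0 % r := by
    have hh : ((r:ℤ)) ∣ ((a*m+1 : ℕ):ℤ) := by push_cast; exact hmod
    have : r ∣ a*m+1 := by exact_mod_cast hh
    rw [Nat.zero_mod]
    omega
  have hym : ((X:Polynomial ℤ)^r - 1) ∣ X * ((X:Polynomial ℤ)^a)^m - 1 := by
    have e : (X:Polynomial ℤ) * ((X:Polynomial ℤ)^a)^m = (X:Polynomial ℤ)^(a*m+1) := by
      rw [← pow_mul, ← pow_succ']
    rw [e, show (1:Polynomial ℤ) = (X:Polynomial ℤ)^0 from (pow_zero X).symm]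
    exact powCong r _ _ hdr
  obtain ⟨q4, hq4⟩ := hym
  have htent := tentFull ((X:Polynomial ℤ)^a) hmr
  have hq2 := F2Step ((X:Polynomial ℤ)^r - 1) X ((X:Polynomial ℤ)^a)
    (∑ w ∈ Icc 1 r, Polynomial.C (-(min (m : ℤ) |(m : ℤ) - (w : ℤ)|)) * ((X:Polynomial ℤ)^a) ^ w)
    (∑ j ∈ range m, ((X:Polynomial ℤ)^a) ^ j) (∑ w ∈ range r, ((X:Polynomial ℤ)^a) ^ w)
    (((X:Polynomial ℤ)^a)^m) (((X:Polynomial ℤ)^a)^r) (Polynomial.C (m:ℤ)) q3 q4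
    htent (geom_sum_mul _ m) (geom_sum_mul _ r) hq4 hq3
  -- B facts
  have hxr1 : (X:Polynomial ℤ)^(r-1) * X = X^r := by
    rw [← pow_succ]; congr 1; omega
  have hxra : (X:Polynomial ℤ)^a * X^(r-a) = X^r := by
    rw [← pow_add]; congr 1; omega
  have hw1 : (X:Polynomial ℤ) * ((X:Polynomial ℤ)^(r-1) - 1) = ((X:Polynomial ℤ)^r - 1) + 1 - X := by
    linear_combination hxr1
  have hw2 : (X:Polynomial ℤ)^a * ((X:Polynomial ℤ)^(r-a) - 1)
      = ((X:Polynomial ℤ)^r - 1) + 1 - (X:Polynomial ℤ)^a := by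
    linear_combination hxra
  have hbig := bigStep ((X:Polynomial ℤ)^r - 1) X ((X:Polynomial ℤ)^a)
    (∑ j ∈ range (r - 1), (X:Polynomial ℤ) ^ j) (∑ j ∈ range a, (X:Polynomial ℤ) ^ j)
    (∑ j ∈ range (r - a), (X:Polynomial ℤ) ^ j)
    (∑ i ∈ range (r - 1),
      Polynomial.C (-(min (m : ℤ) |(m : ℤ) - (ia i : ℤ)|)) * (X:Polynomial ℤ) ^ (i + 3))
    (∑ w ∈ Icc 1 r, Polynomial.C (-(min (m : ℤ) |(m : ℤ) - (w : ℤ)|)) * ((X:Polynomial ℤ)^a) ^ w)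
    ((X:Polynomial ℤ)^(r-1) - 1) ((X:Polynomial ℤ)^(r-a) - 1) q1
    (((X:Polynomial ℤ)^a)*(X*(((X:Polynomial ℤ)^a)^m) - 2*X + 1)*q4
      - (Polynomial.C (m:ℤ))*X^2*((X:Polynomial ℤ)^a)*(((X:Polynomial ℤ)^a)-1)*q3)
    (geom_sum_mul _ (r-1)) (geom_sum_mul _ a) (geom_sum_mul _ (r-a)) hw1 hw2 hq1 hq2
  have hAP : (∑ i ∈ range r, (X : Polynomial ℤ) ^ i) ∣ ((X:Polynomial ℤ)^r - 1) :=
    ⟨X - 1, (geom_sum_mul X r).symm⟩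
  have hbig' : (∑ i ∈ range r, (X : Polynomial ℤ) ^ i) ∣
      (X:Polynomial ℤ)^(4+a) * ((X:Polynomial ℤ) - 1)^3 *
        ((∑ j ∈ range (r - 1), (X:Polynomial ℤ) ^ j) * (∑ j ∈ range a, (X:Polynomial ℤ) ^ j) *
          (∑ j ∈ range (r - a), (X:Polynomial ℤ) ^ j) *
          (∑ i ∈ range (r - 1),
            Polynomial.C (-(min (m : ℤ) |(m : ℤ) - (ia i : ℤ)|)) * (X:Polynomial ℤ) ^ (i + 3)) - 1) := by
    have e : (X:Polynomial ℤ)^(4+a) * ((X:Polynomial ℤ) - 1)^3 *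
        ((∑ j ∈ range (r - 1), (X:Polynomial ℤ) ^ j) * (∑ j ∈ range a, (X:Polynomial ℤ) ^ j) *
          (∑ j ∈ range (r - a), (X:Polynomial ℤ) ^ j) *
          (∑ i ∈ range (r - 1),
            Polynomial.C (-(min (m : ℤ) |(m : ℤ) - (ia i : ℤ)|)) * (X:Polynomial ℤ) ^ (i + 3)) - 1)
        = ((X:Polynomial ℤ)^4 * ((X:Polynomial ℤ)^a) * ((X:Polynomial ℤ) - 1)^3) *
        ((∑ j ∈ range (r - 1), (X:Polynomial ℤ) ^ j) * (∑ j ∈ range a, (X:Polynomial ℤ) ^ j) *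
          (∑ j ∈ range (r - a), (X:Polynomial ℤ) ^ j) *
          (∑ i ∈ range (r - 1),
            Polynomial.C (-(min (m : ℤ) |(m : ℤ) - (ia i : ℤ)|)) * (X:Polynomial ℤ) ^ (i + 3)) - 1) := by
      rw [pow_add]
    rw [e]
    exact dvd_trans hAP hbig
  exact cancelStep r (4+a) 3 hr _ hbig'
end

section
/- Let r > 1 and 1 ≤ a < r be coprime, and suppose m satisfies 0 < m ≤ r/2 and a·m ≡ -1 (mod r). For 0 ≤ i ≤ r-2, let i_a be the unique integer with 0 < i_a ≤ r and i_a ≡ -i·m (mod r), and set c_{i+3} = -min{m, |m - i_a|}. Then c_{i+3} < 0 for every i with 0 ≤ i ≤ r-2. -/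
/-- with `r > 1`, `1 ≤ a < r` coprime, `0 < m ≤ r/2`, `a·m ≡ -1 (mod r)`,
and `i_a` the unique integer with `0 < i_a ≤ r` and `i_a ≡ -i·m (mod r)`, the
coefficient `c_{i+3} = -min{m, |m - i_a|}` is strictly negative for all `0 ≤ i ≤ r-2`. -/
theorem stmt8 (r a m : ℕ) (hr : 1 < r) (ha1 : 1 ≤ a) (har : a < r)
    (hcop : Nat.Coprime a r) (hm0 : 0 < m) (hmr : 2 * m ≤ r)
    (hmod : (r : ℤ) ∣ (a * m + 1))
    (ia : ℕ → ℕ) (hia : ∀ i, 0 < ia i ∧ ia i ≤ r ∧ (r : ℤ) ∣ (ia i + i * m)) :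
    ∀ i ≤ r - 2, -(min (m : ℤ) |(m : ℤ) - (ia i : ℤ)|) < 0 := by
  intro i hi
  obtain ⟨h1, h2, h3⟩ := hia i
  have hne : (ia i : ℤ) ≠ (m : ℤ) := by
    intro he
    obtain ⟨k, hk⟩ := hmod
    have hcm : IsCoprime (r : ℤ) (m : ℤ) := ⟨k, -(a : ℤ), by linarith⟩
    have hdvd : (r : ℤ) ∣ ((i : ℤ) + 1) * m := by
      have : ((i : ℤ) + 1) * m = (ia i : ℤ) + i * m := by rw [he]; ring
      rw [this]; exact h3
    have hdi : (r : ℤ) ∣ ((i : ℤ) + 1) := hcm.dvd_of_dvd_mul_right hdvd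
    have hle : (r : ℤ) ≤ (i : ℤ) + 1 := Int.le_of_dvd (by positivity) hdi
    have : (i : ℤ) ≤ (r : ℤ) - 2 := by
      have := hi
      omega
    linarith
  have h4 : (0 : ℤ) < |(m : ℤ) - (ia i : ℤ)| := by
    rw [abs_pos]
    intro h0
    exact hne (by linarith)
  have : (0 : ℤ) < min (m : ℤ) |(m : ℤ) - (ia i : ℤ)| :=
    lt_min (by exact_mod_cast hm0) h4
  linarith
end
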